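/- arXiv:1802.09475 — 3 statements merged into one kernel-verified Lean document; each statement's English description precedes it below -/
import Mathlib

section
/- Let λ > 0 and α ∈ [0,1). Then the function U_{λ,α} satisfies the singular Liouville equation Δ U_{λ,α}(x) + |x|^{-2α} · e^{U_{λ,α}(x)} = 0 at every point x ∈ ℝ² with x ≠ 0, where Δ denotes the Laplacian Δu = ∂²u/∂x₁² + ∂²u/∂x₂². -/
open Real MeasureTheory Metric Filter Topology RealInnerProductSpace

noncomputable section

/-- The plane `ℝ²`. -/
abbrev Pl := EuclideanSpace ℝ (Fin 2)

/-- The Laplacian `Δu = ∂²u/∂x₁² + ∂²u/∂x₂²` of a function on `ℝ²`. -/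
def lap (u : Pl → ℝ) (x : Pl) : ℝ :=
  ∑ i : Fin 2, fderiv ℝ (fun y => fderiv ℝ u y (EuclideanSpace.single i 1)) x
    (EuclideanSpace.single i 1)

/-- The radial profile of `U_{λ,α}`. -/
def Uval (lam a r : ℝ) : ℝ :=
  Real.log ((lam * (1 - a)) ^ 2 / (1 + lam ^ 2 / 8 * r ^ (2 * (1 - a))) ^ 2)

/-- `U_{λ,α}(x) = ln( (λ(1−α))² / (1 + (λ²/8)|x|^{2(1−α)})² )`. -/
def U (lam a : ℝ) (x : Pl) : ℝ := Uval lam a ‖x‖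

/-!
Write `γ = 1 - α`, `c = λ²/8` and `s = |x|²`, so that `U_{λ,α}(x) = φ(s)` with
`φ(s) = log (λγ)² - 2 log (1 + c s^γ)`. For a function of `|x|²` on the plane,
`Δ = 4 (φ' + s φ'') = 4 (s φ')'`, and here `s φ'(s) = -2γ + 2γ / (1 + c s^γ)`; differentiating,
`4 (s φ')' = -8cγ² s^{γ-1} / (1 + c s^γ)²`. Since `8cγ² = (λγ)²` and `s^{γ-1} = |x|^{-2α}`, this is
`-|x|^{-2α} e^{φ(s)}`.
-/

section RadialCalculus

variable {E : Type*} [NormedAddCommGroup E] [InnerProductSpace ℝ E]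

theorem HasDerivAt.hasFDerivAt_comp_norm_sq {φ : ℝ → ℝ} {φ' : ℝ} {y : E}
    (h : HasDerivAt φ φ' (‖y‖ ^ 2)) :
    HasFDerivAt (fun z => φ (‖z‖ ^ 2)) (φ' • (2 • innerSL ℝ y)) y :=
  h.comp_hasFDerivAt y (hasStrictFDerivAt_norm_sq y).hasFDerivAt

theorem fderiv_comp_norm_sq_apply {φ : ℝ → ℝ} {φ' : ℝ} {y : E}
    (h : HasDerivAt φ φ' (‖y‖ ^ 2)) (v : E) :
    fderiv ℝ (fun z => φ (‖z‖ ^ 2)) y v = φ' * (2 * ⟪y, v⟫) := by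
  simp [h.hasFDerivAt_comp_norm_sq.fderiv]

theorem fderiv_fderiv_comp_norm_sq_apply {φ φ' : ℝ → ℝ} {φ'' : ℝ} {x : E}
    (hφ : ∀ᶠ t in 𝓝 (‖x‖ ^ 2), HasDerivAt φ (φ' t) t) (hφ' : HasDerivAt φ' φ'' (‖x‖ ^ 2))
    (v : E) :
    fderiv ℝ (fun y => fderiv ℝ (fun z => φ (‖z‖ ^ 2)) y v) x v
      = 2 * φ' (‖x‖ ^ 2) * ‖v‖ ^ 2 + 4 * φ'' * ⟪x, v⟫ ^ 2 := by
  have hfirst : (fun y => fderiv ℝ (fun z => φ (‖z‖ ^ 2)) y v)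
      =ᶠ[𝓝 x] fun y => φ' (‖y‖ ^ 2) * (2 * ⟪y, v⟫) :=
    ((continuous_norm.pow 2).continuousAt.eventually hφ).mono
      fun y hy => fderiv_comp_norm_sq_apply hy v
  have hinner : HasFDerivAt (fun y : E => 2 * ⟪y, v⟫) ((2 : ℝ) • innerSL ℝ v) x := by
    simpa only [real_inner_comm, coe_innerSL_apply] using
      ((innerSL ℝ v).hasFDerivAt (x := x)).const_mul 2
  have hprod : HasFDerivAt (fun y => φ' (‖y‖ ^ 2) * (2 * ⟪y, v⟫)) _ x :=
    hφ'.hasFDerivAt_comp_norm_sq.mul hinner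
  rw [hfirst.fderiv_eq, hprod.fderiv]
  simp only [add_apply, smul_apply, coe_innerSL_apply,
    real_inner_self_eq_norm_sq, smul_eq_mul, nsmul_eq_mul, Nat.cast_ofNat]
  ring

theorem sum_fderiv_fderiv_comp_norm_sq {ι : Type*} [Fintype ι] [DecidableEq ι]
    {φ φ' : ℝ → ℝ} {φ'' : ℝ} {x : EuclideanSpace ℝ ι}
    (hφ : ∀ᶠ t in 𝓝 (‖x‖ ^ 2), HasDerivAt φ (φ' t) t) (hφ' : HasDerivAt φ' φ'' (‖x‖ ^ 2)) :
    ∑ i, fderiv ℝ (fun y => fderiv ℝ (fun z => φ (‖z‖ ^ 2)) y (EuclideanSpace.single i 1)) x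
        (EuclideanSpace.single i 1)
      = 2 * Fintype.card ι * φ' (‖x‖ ^ 2) + 4 * ‖x‖ ^ 2 * φ'' := by
  simp only [fderiv_fderiv_comp_norm_sq_apply hφ hφ', PiLp.norm_single, norm_one, one_pow,
    EuclideanSpace.inner_single_right, one_mul, conj_trivial, Finset.sum_add_distrib,
    ← Finset.mul_sum, ← EuclideanSpace.real_norm_sq_eq, Finset.sum_const, Finset.card_univ,
    nsmul_eq_mul]
  ring

theorem lap_comp_norm_sq {φ φ' : ℝ → ℝ} {φ'' : ℝ} {x : Pl}
    (hφ : ∀ᶠ t in 𝓝 (‖x‖ ^ 2), HasDerivAt φ (φ' t) t) (hφ' : HasDerivAt φ' φ'' (‖x‖ ^ 2)) :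
    lap (fun y => φ (‖y‖ ^ 2)) x = 4 * (φ' (‖x‖ ^ 2) + ‖x‖ ^ 2 * φ'') := by
  rw [lap, sum_fderiv_fderiv_comp_norm_sq hφ hφ', Fintype.card_fin]
  push_cast
  ring

end RadialCalculus

section Profile

variable {c γ s : ℝ}

def liouvilleProfile (A c γ s : ℝ) : ℝ := log A - 2 * log (1 + c * s ^ γ)

def liouvilleProfileDeriv (c γ s : ℝ) : ℝ := -(2 * (c * γ * s ^ (γ - 1) / (1 + c * s ^ γ)))

theorem hasDerivAt_one_add_mul_rpow (c : ℝ) (hs : 0 < s) :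
    HasDerivAt (fun t => 1 + c * t ^ γ) (c * γ * s ^ (γ - 1)) s := by
  simpa only [mul_assoc] using
    ((Real.hasDerivAt_rpow_const (p := γ) (Or.inl hs.ne')).const_mul c).const_add 1

theorem hasDerivAt_liouvilleProfile (A : ℝ) (hc : 0 ≤ c) (hs : 0 < s) :
    HasDerivAt (liouvilleProfile A c γ) (liouvilleProfileDeriv c γ s) s := by
  have hD : 1 + c * s ^ γ ≠ 0 := by positivity
  exact (((hasDerivAt_one_add_mul_rpow c hs).log hD).const_mul 2).const_sub (log A)

theorem hasDerivAt_liouvilleProfileDeriv (hc : 0 ≤ c) (hs : 0 < s) :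
    HasDerivAt (liouvilleProfileDeriv c γ)
      (-(2 * ((c * γ * ((γ - 1) * s ^ (γ - 2)) * (1 + c * s ^ γ)
        - c * γ * s ^ (γ - 1) * (c * γ * s ^ (γ - 1))) / (1 + c * s ^ γ) ^ 2))) s := by
  have hD : 1 + c * s ^ γ ≠ 0 := by positivity
  have hnum : HasDerivAt (fun t => c * γ * t ^ (γ - 1)) (c * γ * ((γ - 1) * s ^ (γ - 2))) s := by
    simpa only [sub_sub, one_add_one_eq_two] using
      (Real.hasDerivAt_rpow_const (p := γ - 1) (Or.inl hs.ne')).const_mul (c * γ)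
  exact (((hnum.fun_div (hasDerivAt_one_add_mul_rpow c hs) hD).const_mul 2).neg)

theorem liouvilleProfile_ode {A : ℝ} (hA : 8 * c * γ ^ 2 = A) (hc : 0 < c) (hγ : γ ≠ 0)
    (hs : 0 < s) :
    4 * (liouvilleProfileDeriv c γ s + s * deriv (liouvilleProfileDeriv c γ) s)
      + s ^ (γ - 1) * exp (liouvilleProfile A c γ s) = 0 := by
  subst hA
  have hD : 0 < 1 + c * s ^ γ := by positivity
  have hexp :
      exp (liouvilleProfile (8 * c * γ ^ 2) c γ s) = 8 * c * γ ^ 2 / (1 + c * s ^ γ) ^ 2 := by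
    rw [liouvilleProfile, exp_sub, ← log_rpow hD, exp_log (by positivity), exp_log (by positivity),
      rpow_two]
  have hpow : s ^ γ = s * s ^ (γ - 1) := by
    rw [← rpow_one_add' hs.le (by simpa using hγ)]; ring_nf
  have hpow2 : s ^ (γ - 2) = s ^ (γ - 1) / s := by
    rw [show γ - 2 = γ - 1 - 1 by ring, rpow_sub_one hs.ne']
  rw [(hasDerivAt_liouvilleProfileDeriv hc.le hs).deriv, hexp, liouvilleProfileDeriv, hpow2, hpow]
  rw [hpow] at hD
  field_simp
  ring

end Profile

theorem U_eq_liouvilleProfile {lam a : ℝ} (hlam : lam ≠ 0) (ha : a ≠ 1) :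
    U lam a = fun y =>
      liouvilleProfile ((lam * (1 - a)) ^ 2) (lam ^ 2 / 8) (1 - a) (‖y‖ ^ 2) := by
  funext y
  have hA : (lam * (1 - a)) ^ 2 ≠ 0 := pow_ne_zero 2 (mul_ne_zero hlam (sub_ne_zero.2 ha.symm))
  have hr : ‖y‖ ^ (2 * (1 - a)) = (‖y‖ ^ 2) ^ (1 - a) := by
    rw [rpow_mul (norm_nonneg y), rpow_two]
  rw [U, Uval, hr, liouvilleProfile, log_div hA (by positivity), log_pow (1 + _) 2]
  push_cast
  ring

/-- For `0 < λ` and `α ∈ [0,1)`, the function `U_{λ,α}` satisfies the singular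
Liouville equation at every `x ≠ 0`. -/
theorem singular_liouville_bubble (lam a : ℝ) (hlam : 0 < lam) (ha : a ∈ Set.Ico (0:ℝ) 1)
    (x : Pl) (hx : x ≠ 0) :
    lap (U lam a) x + ‖x‖ ^ (-(2*a)) * Real.exp (U lam a x) = 0 := by
  have hγ : 1 - a ≠ 0 := sub_ne_zero.2 (ne_of_gt ha.2)
  have hc : 0 < lam ^ 2 / 8 := by positivity
  have hs : 0 < ‖x‖ ^ 2 := by positivity
  have hφ : ∀ᶠ t in 𝓝 (‖x‖ ^ 2), HasDerivAt (liouvilleProfile ((lam * (1 - a)) ^ 2)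
      (lam ^ 2 / 8) (1 - a)) (liouvilleProfileDeriv (lam ^ 2 / 8) (1 - a) t) t :=
    eventually_of_mem (Ioi_mem_nhds hs) fun t ht => hasDerivAt_liouvilleProfile _ hc.le ht
  have hweight : ‖x‖ ^ (-(2 * a)) = (‖x‖ ^ 2) ^ (1 - a - 1) := by
    rw [← rpow_two, ← rpow_mul (norm_nonneg x)]
    ring_nf
  rw [U_eq_liouvilleProfile hlam.ne' (ne_of_lt ha.2),
    lap_comp_norm_sq hφ (hasDerivAt_liouvilleProfileDeriv hc.le hs).differentiableAt.hasDerivAt,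
    hweight]
  exact liouvilleProfile_ode (by ring) hc hγ hs
end
end

section
/- Let λ > 0, α ∈ [0,1) and R > 0. Then ∫_{B_R(0)} |x|^{-2α} e^{U_{λ,α}(x)} dx = 8π(1−α) · λ²R^{2(1−α)} / (8 + λ²R^{2(1−α)}), where the integral is with respect to two-dimensional Lebesgue measure on the open ball B_R(0) ⊂ ℝ². -/
open Real MeasureTheory Metric Filter Topology RealInnerProductSpace

noncomputable section

/-! In polar coordinates the mass is `2π ∫₀ᴿ r^{1-2α} e^{U(r)} dr`, and the radial density
`λ²(1-α)² r^{1-2α} / (1 + λ²r^{2(1-α)}/8)²` has the explicit primitive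
`-4(1-α) / (1 + λ²r^{2(1-α)}/8)`, which is continuous at `r = 0`
because `α < 1`. -/

open Set Module

theorem setIntegral_ball_fun_norm_addHaar {E F : Type*} [NormedAddCommGroup E] [NormedSpace ℝ E]
    [Nontrivial E] [FiniteDimensional ℝ E] [MeasurableSpace E] [BorelSpace E] (μ : Measure E)
    [μ.IsAddHaarMeasure] [NormedAddCommGroup F] [NormedSpace ℝ F] (f : ℝ → F) (R : ℝ) :
    ∫ x in ball 0 R, f ‖x‖ ∂μ
      = finrank ℝ E • μ.real (ball 0 1) •
          ∫ r in Ioo 0 R, r ^ (finrank ℝ E - 1) • f r := by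
  have hball : ∀ x : E,
      (ball 0 R).indicator (fun x => f ‖x‖) x = (Iio R).indicator f ‖x‖ :=
    fun x => by by_cases hx : ‖x‖ < R <;> simp [hx]
  have hsmul : ∀ r : ℝ, r ^ (finrank ℝ E - 1) • (Iio R).indicator f r
      = (Iio R).indicator (fun r => r ^ (finrank ℝ E - 1) • f r) r :=
    fun r => by by_cases hr : r < R <;> simp [hr]
  rw [← integral_indicator measurableSet_ball, funext hball, integral_fun_norm_addHaar,
    funext hsmul, setIntegral_indicator measurableSet_Iio, Ioi_inter_Iio]

theorem exp_Uval {lam a r : ℝ} (hlam : lam ≠ 0) (ha : a ≠ 1) (hr : 0 ≤ r) :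
    exp (Uval lam a r) = (lam * (1 - a)) ^ 2 / (1 + lam ^ 2 / 8 * r ^ (2 * (1 - a))) ^ 2 := by
  have : 1 - a ≠ 0 := sub_ne_zero.2 (Ne.symm ha)
  rw [Uval, exp_log (by positivity)]

theorem hasDerivAt_neg_div_one_add_mul_rpow (k b c : ℝ) {r : ℝ} (hr : r ≠ 0)
    (hden : 1 + b * r ^ c ≠ 0) :
    HasDerivAt (fun s => -k / (1 + b * s ^ c)) (k * b * c * r ^ (c - 1) / (1 + b * r ^ c) ^ 2)
      r := by
  have hden' := ((hasDerivAt_rpow_const (p := c) (Or.inl hr)).const_mul b).const_add 1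
  exact ((hasDerivAt_const r (-k)).div hden' hden).congr_deriv (by ring)

theorem hasDerivAt_bubble_primitive {lam a r : ℝ} (hlam : lam ≠ 0) (ha : a ≠ 1) (hr : 0 < r) :
    HasDerivAt (fun s => -(4 * (1 - a)) / (1 + lam ^ 2 / 8 * s ^ (2 * (1 - a))))
      (r * (r ^ (-(2 * a)) * exp (Uval lam a r))) r := by
  have hden : 0 < 1 + lam ^ 2 / 8 * r ^ (2 * (1 - a)) := by positivity
  convert hasDerivAt_neg_div_one_add_mul_rpow _ _ _ hr.ne' hden.ne' using 1
  have hpow : r * r ^ (-(2 * a)) = r ^ (2 * (1 - a) - 1) := by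
    rw [show 2 * (1 - a) - 1 = 1 + -(2 * a) by ring, rpow_add hr, rpow_one]
  rw [exp_Uval hlam ha hr.le, ← mul_assoc, hpow]
  field_simp
  ring

theorem integral_Ioo_bubble {lam a R : ℝ} (hlam : lam ≠ 0) (ha : a < 1) (hR : 0 ≤ R) :
    ∫ r in Ioo 0 R, r * (r ^ (-(2 * a)) * exp (Uval lam a r))
      = 4 * (1 - a) * (lam ^ 2 * R ^ (2 * (1 - a)) / (8 + lam ^ 2 * R ^ (2 * (1 - a)))) := by
  set F : ℝ → ℝ := fun s => -(4 * (1 - a)) / (1 + lam ^ 2 / 8 * s ^ (2 * (1 - a)))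
  have hderiv : ∀ r ∈ Ioo 0 R, HasDerivAt F (r * (r ^ (-(2 * a)) * exp (Uval lam a r))) r :=
    fun r hr => hasDerivAt_bubble_primitive hlam ha.ne hr.1
  have hcont : ContinuousOn F (Icc 0 R) := by
    refine continuousOn_const.div (continuousOn_const.add (continuousOn_const.mul ?_)) ?_
    · exact fun r _ => (continuousAt_rpow_const r _ (Or.inr (by linarith))).continuousWithinAt
    · intro r hr
      have := hr.1
      positivity
  have hint : IntervalIntegrable (fun r => r * (r ^ (-(2 * a)) * exp (Uval lam a r))) volume 0 R :=
    (intervalIntegrable_iff_integrableOn_Ioc_of_le hR).2 <|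
      intervalIntegral.integrableOn_deriv_of_nonneg hcont hderiv fun r hr => by
        have := hr.1
        positivity
  rw [← integral_Ioc_eq_integral_Ioo, ← intervalIntegral.integral_of_le hR,
    intervalIntegral.integral_eq_sub_of_hasDerivAt_of_le hR hcont hderiv hint]
  have h0 : (0 : ℝ) ^ (2 * (1 - a)) = 0 := zero_rpow (by linarith)
  simp only [F, h0]
  field_simp
  ring

/-- The mass of the bubble `U_{λ,α}` on the ball `B_R(0)`. -/
theorem bubble_mass_ball (lam a R : ℝ) (hlam : 0 < lam) (ha : a ∈ Set.Ico (0:ℝ) 1)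
    (hR : 0 < R) :
    ∫ x in ball (0 : Pl) R, ‖x‖ ^ (-(2*a)) * Real.exp (U lam a x)
      = 8 * π * (1 - a) * (lam ^ 2 * R ^ (2*(1-a)) / (8 + lam ^ 2 * R ^ (2*(1-a)))) := by
  have hvol : (volume : Measure Pl).real (ball 0 1) = π := by
    simp [measureReal_def, pi_nonneg]
  simp only [U]
  rw [setIntegral_ball_fun_norm_addHaar volume (fun r => r ^ (-(2 * a)) * exp (Uval lam a r)),
    finrank_euclideanSpace_fin, hvol]
  simp only [Nat.add_one_sub_one, pow_one, smul_eq_mul, nsmul_eq_mul]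
  rw [integral_Ioo_bubble hlam.ne' ha.2 hR.le]
  push_cast
  ring
end
end

section
/- Let β, γ ∈ ℝ with β > 8π, γ > β/(8π) − 1 and γ − 1 + β/(8π) > 0, and let r > 0 be defined by r² = ( γ + 1 − β/(8π) ) / ( γ − 1 + β/(8π) ). Then ∫_{B_r(0)} [ 4(2 − β/(4π)) / (1 + |x|²)² − 8γ (|x|² − 1) / (1 + |x|²)³ ] dx = 8π ( γ + 1 − β/(8π) )² / (4γ), where the integral is over the open ball B_r(0) ⊂ ℝ² with respect to two-dimensional Lebesgue measure. -/
open Real MeasureTheory Metric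

/-!
The integrand is `g(‖x‖)` for a rational radial profile `g`, so in polar coordinates the
integral over `B_r(0)` becomes `2π ∫₀ʳ t g(t) dt`. With `c = 2 - β/(4π)`, `t g(t)` has the
explicit primitive `(4γ - 2c)/(1 + t²) - 4γ/(1 + t²)²`. The choice of `r` means
`1 + r² = 2γ/(γ - 1 + β/(8π))`, at which the primitive collapses to the stated square.
-/

noncomputable section

section Polar

variable {E F : Type*} [NormedAddCommGroup E] [NormedSpace ℝ E] [Nontrivial E]
  [FiniteDimensional ℝ E] [MeasurableSpace E] [BorelSpace E] (μ : Measure E) [μ.IsAddHaarMeasure]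
  [NormedAddCommGroup F] [NormedSpace ℝ F]

theorem integral_ball_fun_norm_addHaar (f : ℝ → F) {r : ℝ} (hr : 0 ≤ r) :
    ∫ x in ball (0 : E) r, f ‖x‖ ∂μ = Module.finrank ℝ E • μ.real (ball 0 1) •
      ∫ t in 0..r, t ^ (Module.finrank ℝ E - 1) • f t := by
  have h_ball : (ball (0 : E) r).indicator (fun x => f ‖x‖) =
      fun x => (Set.Iio r).indicator f ‖x‖ := by
    ext x
    by_cases hx : ‖x‖ < r <;> simp [hx]
  have h_radial : (fun t : ℝ => t ^ (Module.finrank ℝ E - 1) • (Set.Iio r).indicator f t) =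
      (Set.Iio r).indicator (fun t => t ^ (Module.finrank ℝ E - 1) • f t) := by
    ext t
    by_cases ht : t < r <;> simp [ht]
  rw [← integral_indicator measurableSet_ball, h_ball, integral_fun_norm_addHaar μ, h_radial,
    integral_indicator measurableSet_Iio, Measure.restrict_restrict measurableSet_Iio,
    Set.Iio_inter_Ioi, intervalIntegral.integral_of_le hr, integral_Ioc_eq_integral_Ioo]

end Polar

theorem integral_ball_fun_norm_plane (f : ℝ → ℝ) {r : ℝ} (hr : 0 ≤ r) :
    ∫ x in ball (0 : Pl) r, f ‖x‖ = 2 * π * ∫ t in 0..r, t * f t := by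
  rw [integral_ball_fun_norm_addHaar volume f hr, measureReal_def,
    EuclideanSpace.volume_ball_fin_two]
  simp [mul_assoc, pi_nonneg]

/-- The radial profile of `-ΔH`. -/
def curvatureProfile (c γ t : ℝ) : ℝ :=
  4 * c / (1 + t ^ 2) ^ 2 - 8 * γ * (t ^ 2 - 1) / (1 + t ^ 2) ^ 3

def curvaturePrimitive (c γ t : ℝ) : ℝ :=
  (4 * γ - 2 * c) / (1 + t ^ 2) - 4 * γ / (1 + t ^ 2) ^ 2

theorem continuous_curvatureProfile (c γ : ℝ) : Continuous (curvatureProfile c γ) := by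
  have hs : ∀ t : ℝ, 1 + t ^ 2 ≠ 0 := fun t => by positivity
  unfold curvatureProfile
  fun_prop (disch := simp [hs])

theorem hasDerivAt_curvaturePrimitive (c γ t : ℝ) :
    HasDerivAt (curvaturePrimitive c γ) (t * curvatureProfile c γ t) t := by
  have hs : 1 + t ^ 2 ≠ 0 := by positivity
  have h_base : HasDerivAt (fun t : ℝ => 1 + t ^ 2) (2 * t) t := by
    simpa using (hasDerivAt_pow 2 t).const_add 1
  have h_sq : HasDerivAt (fun t : ℝ => (1 + t ^ 2) ^ 2) (2 * (1 + t ^ 2) * (2 * t)) t := by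
    simpa using h_base.fun_pow 2
  refine (((hasDerivAt_const t _).fun_div h_base hs).fun_sub
    ((hasDerivAt_const t _).fun_div h_sq (pow_ne_zero 2 hs))).congr_deriv ?_
  unfold curvatureProfile
  field_simp
  ring

theorem integral_mul_curvatureProfile (c γ r : ℝ) :
    ∫ t in 0..r, t * curvatureProfile c γ t =
      curvaturePrimitive c γ r - curvaturePrimitive c γ 0 :=
  intervalIntegral.integral_eq_sub_of_hasDerivAt
    (fun t _ => hasDerivAt_curvaturePrimitive c γ t)
    ((continuous_id.mul (continuous_curvatureProfile c γ)).intervalIntegrable 0 r)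

theorem onsager_positive_mass_general (β γ r : ℝ)
    (hγ' : 0 < γ - 1 + β/(8*π))
    (hr : 0 < r) (hr2 : r ^ 2 = (γ + 1 - β/(8*π)) / (γ - 1 + β/(8*π))) :
    ∫ x in ball (0 : Pl) r,
        (4 * (2 - β/(4*π)) / (1 + ‖x‖ ^ 2) ^ 2 - 8 * γ * (‖x‖ ^ 2 - 1) / (1 + ‖x‖ ^ 2) ^ 3)
      = 8 * π * (γ + 1 - β/(8*π)) ^ 2 / (4 * γ) := by
  have hβ_half : β/(4*π) = 2 * (β/(8*π)) := by field_simp; ring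
  set b := β/(8*π)
  have hs : 1 + r ^ 2 = 2 * γ / (γ - 1 + b) := by
    rw [hr2]; field_simp; ring
  have hγ_pos : 0 < γ := by
    have : 0 < 2 * γ / (γ - 1 + b) := hs ▸ by positivity
    linarith [(div_pos_iff_of_pos_right hγ').mp this]
  rw [hβ_half]
  change ∫ x in ball (0 : Pl) r, curvatureProfile (2 - 2 * b) γ ‖x‖ = _
  rw [integral_ball_fun_norm_plane _ hr.le, integral_mul_curvatureProfile]
  simp only [curvaturePrimitive, hs]
  field_simp
  ring

/-- The total positive curvature mass for the spherical Onsager vortex problem. -/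
theorem onsager_positive_mass (β γ r : ℝ) (hβ : 8*π < β)
    (hγ : β/(8*π) - 1 < γ) (hγ' : 0 < γ - 1 + β/(8*π))
    (hr : 0 < r) (hr2 : r ^ 2 = (γ + 1 - β/(8*π)) / (γ - 1 + β/(8*π))) :
    ∫ x in ball (0 : Pl) r,
        (4 * (2 - β/(4*π)) / (1 + ‖x‖ ^ 2) ^ 2 - 8 * γ * (‖x‖ ^ 2 - 1) / (1 + ‖x‖ ^ 2) ^ 3)
      = 8 * π * (γ + 1 - β/(8*π)) ^ 2 / (4 * γ) :=
  onsager_positive_mass_general β γ r hγ' hr hr2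
end
end
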